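/- arXiv:2504.18218 — 3 statements merged into one kernel-verified Lean document; each statement's English description precedes it below -/
import Mathlib

section
/- Let G be a graph with a contraction sequence (G = G_1, ..., G_n) of width d and let k be a natural number. Let i in [2, n], let π be an extended i-profile with v in T (where v is the new vertex of G_i), let f' be compatible with π, let {(T_j, D_j, M_j, f_j) : j in [m]} be an f'-decomposition of π, and let S be a solution of π satisfying |S ∩ beta(u)| = f'(u) for every u in T'. If j in [m] and u in T_j has a black neighbor in G_{i-1} belonging to D_ℓ for some ℓ in [m], then beta(u) ⊆ N[S], where N[S] is the closed neighborhood of S in G. -/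
attribute [local instance 10] Classical.propDecidable

/-- A trigraph: a finite simple graph whose edges are partitioned into black and red edges. -/
structure Trigraph (α : Type) where
  verts : Finset α
  black : α → α → Prop
  red : α → α → Prop
  black_symm : ∀ x y, black x y → black y x
  red_symm : ∀ x y, red x y → red y x
  black_irrefl : ∀ x, ¬ black x x
  red_irrefl : ∀ x, ¬ red x x
  black_red_disjoint : ∀ x y, black x y → ¬ red x y
  black_mem : ∀ x y, black x y → x ∈ verts ∧ y ∈ verts
  red_mem : ∀ x y, red x y → x ∈ verts ∧ y ∈ verts

namespace Trigraph

/-- The red graph of a trigraph. -/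
def redGraph {α : Type} (G : Trigraph α) : SimpleGraph α where
  Adj := G.red
  symm := ⟨fun x y h => G.red_symm x y h⟩
  loopless := ⟨fun x h => G.red_irrefl x h⟩

/-- The red degree of a vertex. -/
noncomputable def redDegree {α : Type} (G : Trigraph α) (x : α) : ℕ :=
  Set.ncard {y | G.red x y}

end Trigraph

variable {α : Type} [DecidableEq α]

/-- `Contracts G G' u v w` : the trigraph `G'` is obtained from the trigraph `G` by
contracting the two distinct vertices `u, v` into the new vertex `w`. -/
def Contracts (G G' : Trigraph α) (u v w : α) : Prop :=
  u ∈ G.verts ∧ v ∈ G.verts ∧ u ≠ v ∧ w ∉ G.verts ∧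
  G'.verts = insert w (G.verts \ {u, v}) ∧
  (∀ x ∈ G.verts \ {u, v}, (G'.black w x ↔ G.black u x ∧ G.black v x)) ∧
  (∀ x ∈ G.verts \ {u, v},
    (G'.red w x ↔ (¬ (G.black u x ∧ G.black v x)) ∧
      (G.black u x ∨ G.red u x ∨ G.black v x ∨ G.red v x))) ∧
  (∀ x, x ∈ G.verts \ {u, v} → ∀ y, y ∈ G.verts \ {u, v} →
    ((G'.black x y ↔ G.black x y) ∧ (G'.red x y ↔ G.red x y)))

/-- A contraction sequence `(G = G₁, …, Gₙ)` of a graph `G` (a trigraph with no red edges),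
together with the data of the contracted vertices `cu i, cv i` and the new vertex `cw i`
at each step `i ∈ [2, n]`. -/
structure ContractionSeq (α : Type) [DecidableEq α] (n : ℕ) where
  seq : ℕ → Trigraph α
  cu : ℕ → α
  cv : ℕ → α
  cw : ℕ → α
  one_le : 1 ≤ n
  init_noRed : ∀ x y, ¬ (seq 1).red x y
  last_single : (seq n).verts.card = 1
  step : ∀ i, 2 ≤ i → i ≤ n → Contracts (seq (i - 1)) (seq i) (cu i) (cv i) (cw i)

namespace ContractionSeq

variable {n : ℕ}

/-- The contraction sequence has width `d`: every vertex of every trigraph in the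
sequence has red degree at most `d`. -/
def HasWidth (C : ContractionSeq α n) (d : ℕ) : Prop :=
  ∀ i, 1 ≤ i → i ≤ n → ∀ x, (C.seq i).redDegree x ≤ d

/-- The bag `β(u)` of a vertex `u` of `Gᵢ`: the set of vertices of `G = G₁`
contracted into `u`. -/
def bag (C : ContractionSeq α n) : ℕ → α → Finset α
  | 0, x => {x}
  | 1, x => {x}
  | i + 2, x =>
    if x = C.cw (i + 2) then bag C (i + 1) (C.cu (i + 2)) ∪ bag C (i + 1) (C.cv (i + 2))
    else bag C (i + 1) x

/-- `β(T)`, the union of the bags of the vertices in `T`. -/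
def bags (C : ContractionSeq α n) (i : ℕ) (T : Finset α) : Finset α :=
  T.biUnion (C.bag i)

end ContractionSeq

variable {n : ℕ}

/-- A basic `i`-profile `(T, D)`. -/
def IsBasicProfile (C : ContractionSeq α n) (k d i : ℕ) (T D : Finset α) : Prop :=
  T ⊆ (C.seq i).verts ∧ T.card ≤ k * (d + 1) ∧
  (SimpleGraph.induce (↑T : Set α) (C.seq i).redGraph).Connected ∧
  D ⊆ T ∧ D.card ≤ k

/-- `T' = (T \ {v}) ∪ {u₁, u₂}` where `v = cw i` is the new vertex of `Gᵢ` and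
`u₁ = cu i`, `u₂ = cv i` are the vertices contracted into it. -/
def newT (C : ContractionSeq α n) (i : ℕ) (T : Finset α) : Finset α :=
  T.erase (C.cw i) ∪ {C.cu i, C.cv i}

/-- `D' ⊆ T'` is compatible with the basic `i`-profile `(T, D)`. -/
def DCompat (C : ContractionSeq α n) (k i : ℕ) (T D D' : Finset α) : Prop :=
  D' ⊆ newT C i T ∧
  D.erase (C.cw i) = (D'.erase (C.cu i)).erase (C.cv i) ∧
  D'.card ≤ k ∧
  (C.cw i ∈ D ↔ (C.cu i ∈ D' ∨ C.cv i ∈ D'))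

/-- A `D'`-decomposition `{(T₁, D₁), …, (Tₘ, Dₘ)}` of the basic `i`-profile `(T, D)`. -/
def IsDDecomp (C : ContractionSeq α n) (k d i : ℕ) (T D D' : Finset α)
    (m : ℕ) (Tj Dj : Fin m → Finset α) : Prop :=
  (∀ j, IsBasicProfile C k d (i - 1) (Tj j) (Dj j)) ∧
  (∀ j ℓ, j ≠ ℓ → Disjoint (Tj j) (Tj ℓ)) ∧
  newT C i T = Finset.univ.biUnion Tj ∧
  D' = Finset.univ.biUnion Dj ∧
  DCompat C k i T D D' ∧
  (∀ j ℓ, j ≠ ℓ → ∀ x ∈ Tj j, ∀ y ∈ Dj ℓ, ¬ (C.seq (i - 1)).red x y)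

/-- An extended `i`-profile `(T, D, M, f)`; the function `f : T → [0, k]` is modelled as a
function `f : α → ℕ` vanishing outside `T`. -/
def IsExtProfile (C : ContractionSeq α n) (k d i : ℕ) (T D M : Finset α) (f : α → ℕ) : Prop :=
  IsBasicProfile C k d i T D ∧ M ⊆ T ∧
  (∀ u, u ∉ T → f u = 0) ∧
  (∀ u ∈ T, f u ≤ k) ∧
  (∑ u ∈ T, f u) ≤ k ∧
  (∀ u ∈ T, f u ≤ (C.bag i u).card) ∧
  D = T.filter (fun u => f u ≠ 0)

/-- A solution of an extended `i`-profile `(T, D, M, f)`. -/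
def IsSolution (C : ContractionSeq α n) (i : ℕ) (T : Finset α) (f : α → ℕ)
    (S : Finset α) : Prop :=
  S ⊆ C.bags i T ∧ ∀ u ∈ T, f u = (S ∩ C.bag i u).card

/-- The closed neighborhood `N[S]` of `S` in the graph `G = G₁`. -/
def closedNbhd (C : ContractionSeq α n) (S : Finset α) : Set α :=
  ↑S ∪ {x | ∃ y ∈ S, (C.seq 1).black x y}

/-- The dominating-set-value `|N[S] ∩ β(M)|` of a solution `S`. -/
noncomputable def dsValue (C : ContractionSeq α n) (i : ℕ) (M S : Finset α) : ℕ :=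
  Set.ncard (closedNbhd C S ∩ ↑(C.bags i M))

/-- The vertex-cover-value of a solution `S`: the number of edges of `G` with one
endpoint in `S` and the other endpoint in `β(T)`. -/
noncomputable def vcValue (C : ContractionSeq α n) (i : ℕ) (T S : Finset α) : ℕ :=
  Set.ncard {e : Sym2 α | ∃ x y, e = s(x, y) ∧ (C.seq 1).black x y ∧ x ∈ S ∧ y ∈ C.bags i T}

/-- The function `f' : T' → [0, k]` is compatible with the extended `i`-profile
`(T, D, M, f)`. -/
def FCompat (C : ContractionSeq α n) (k i : ℕ) (T : Finset α) (f f' : α → ℕ) : Prop :=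
  (∀ u, u ∉ newT C i T → f' u = 0) ∧
  (∀ u ∈ newT C i T, f' u ≤ k) ∧
  f (C.cw i) = f' (C.cu i) + f' (C.cv i) ∧
  f' (C.cu i) ≤ (C.bag (i - 1) (C.cu i)).card ∧
  f' (C.cv i) ≤ (C.bag (i - 1) (C.cv i)).card ∧
  (∀ u ∈ T.erase (C.cw i), f' u = f u)

/-- `D' = {u ∈ T' : f'(u) ≠ 0}`. -/
def Dset (C : ContractionSeq α n) (i : ℕ) (T : Finset α) (f' : α → ℕ) : Finset α :=
  (newT C i T).filter (fun u => f' u ≠ 0)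

/-- `M-hat = (M \ {v}) ∪ {u₁, u₂}` if `v ∈ M`, and `M-hat = M` otherwise. -/
def Mhat (C : ContractionSeq α n) (i : ℕ) (M : Finset α) : Finset α :=
  if C.cw i ∈ M then M.erase (C.cw i) ∪ {C.cu i, C.cv i} else M

/-- `M' = {u ∈ M-hat : u has no black neighbor in D' in G_{i-1}}`. -/
noncomputable def Mset (C : ContractionSeq α n) (i : ℕ) (M D' : Finset α) : Finset α :=
  (Mhat C i M).filter (fun u => ¬ ∃ w ∈ D', (C.seq (i - 1)).black u w)

/-- An `f'`-decomposition `{(Tⱼ, Dⱼ, Mⱼ, fⱼ) : j ∈ [m]}` of the extended `i`-profile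
`(T, D, M, f)`. -/
def IsFDecomp (C : ContractionSeq α n) (k d i : ℕ) (T D M : Finset α) (f' : α → ℕ)
    (m : ℕ) (Tj Dj Mj : Fin m → Finset α) (fj : Fin m → α → ℕ) : Prop :=
  (∀ j, IsExtProfile C k d (i - 1) (Tj j) (Dj j) (Mj j) (fj j)) ∧
  (∀ j, ∀ u ∈ Tj j, fj j u = f' u) ∧
  Dset C i T f' = Finset.univ.biUnion Dj ∧
  Mset C i M (Dset C i T f') = Finset.univ.biUnion Mj ∧
  IsDDecomp C k d i T D (Dset C i T f') m Tj Dj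

/-- The adjacency relation of the expanded graph `G_π` of a virtual profile with
context `T`, virtual vertices `Vv` and virtual edges `E`. -/
def expAdj (C : ContractionSeq α n) (i : ℕ) (T Vv : Finset α) (E : Finset (Sym2 α))
    (x y : α) : Prop :=
  (x ∈ C.bags i T ∧ y ∈ C.bags i T ∧ (C.seq 1).black x y) ∨
  (x ∈ Vv ∧ y ∈ Vv ∧ s(x, y) ∈ E) ∨
  (y ∈ Vv ∧ ∃ u ∈ T, x ∈ C.bag i u ∧ s(u, y) ∈ E) ∨
  (x ∈ Vv ∧ ∃ u ∈ T, y ∈ C.bag i u ∧ s(u, x) ∈ E)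

/-- A virtual `i`-profile `(T, D, V, E, f, H)`.  The graph `H` is given by its labeling
`h : [k] → V(H)` (so `V(H)` is the range of `h`) and its edge set `HE`. -/
def IsVirtualProfile (C : ContractionSeq α n) (k d i : ℕ)
    (T D Vv : Finset α) (E : Finset (Sym2 α)) (f h : Fin k → α)
    (HE : Finset (Sym2 α)) : Prop :=
  IsBasicProfile C k d i T D ∧
  Vv.card ≤ k ∧
  (∀ x ∈ Vv, ∀ j, 1 ≤ j → j ≤ n → x ∉ (C.seq j).verts) ∧
  (∀ e ∈ E, ∃ u w, e = s(u, w) ∧ u ∈ Vv ∪ T ∧ w ∈ Vv) ∧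
  (∀ a, f a ∈ D ∪ Vv) ∧
  (∀ x ∈ D ∪ Vv, ∃ a, f a = x) ∧
  (∀ u ∈ D, (Finset.univ.filter (fun a => f a = u)).card ≤ (C.bag i u).card) ∧
  (∀ e ∈ HE, ¬ e.IsDiag ∧ ∀ x ∈ e, ∃ a, h a = x)

/-- A solution `(s₁, …, s_k)` of a virtual `i`-profile. -/
def IsVSolution (C : ContractionSeq α n) (i k : ℕ)
    (T D Vv : Finset α) (E : Finset (Sym2 α)) (f h : Fin k → α) (HE : Finset (Sym2 α))
    (sol : Fin k → α) : Prop :=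
  (∀ a, (f a ∈ Vv → sol a = f a) ∧ (f a ∈ D → sol a ∈ C.bag i (f a))) ∧
  (∀ a b, sol a = sol b ↔ h a = h b) ∧
  (∀ a b, expAdj C i T Vv E (sol a) (sol b) ↔ s(h a, h b) ∈ HE)

/-- Quantifier-free first-order formulas in the language of graphs with free variables
`x₁, …, x_k, y` (the variable `y` being the last one). -/
inductive QF (k : ℕ) : Type where
  | eq : Fin (k + 1) → Fin (k + 1) → QF k
  | adj : Fin (k + 1) → Fin (k + 1) → QF k
  | not : QF k → QF k
  | and : QF k → QF k → QF k
  | or : QF k → QF k → QF k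

/-- Satisfaction of a quantifier-free formula under an adjacency relation `A` and a
valuation `val` of the variables. -/
def QF.Sat {β : Type} {k : ℕ} (A : β → β → Prop) (val : Fin (k + 1) → β) : QF k → Prop
  | .eq a b => val a = val b
  | .adj a b => A (val a) (val b)
  | .not φ => ¬ QF.Sat A val φ
  | .and φ ψ => QF.Sat A val φ ∧ QF.Sat A val ψ
  | .or φ ψ => QF.Sat A val φ ∨ QF.Sat A val ψ

/-- The value `Σ_{α ∈ I} |{u ∈ β(T) : G_π ⊨ ψ_α(s₁, …, s_k, u)}|` of a solution of a
virtual `i`-profile. -/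
noncomputable def vValue {I : Type} [Fintype I] {k : ℕ} (ψ : I → QF k)
    (C : ContractionSeq α n) (i : ℕ) (T Vv : Finset α) (E : Finset (Sym2 α))
    (sol : Fin k → α) : ℕ :=
  ∑ a : I, Set.ncard {u : α | u ∈ C.bags i T ∧
    QF.Sat (expAdj C i T Vv E) (Fin.snoc sol u) (ψ a)}

/-- The function `f' : [k] → T' ∪ V` is compatible with the virtual `i`-profile. -/
def VFCompat (C : ContractionSeq α n) (i k : ℕ) (f f' : Fin k → α) : Prop :=
  ∀ a, (f a = C.cw i → (f' a = C.cu i ∨ f' a = C.cv i)) ∧ (f a ≠ C.cw i → f' a = f a)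

/-- `E' = {uw ∈ E : u, w ∈ T' ∪ V} ∪ {u₁w, u₂w : vw ∈ E}`. -/
def Eprime (C : ContractionSeq α n) (i : ℕ) (T Vv : Finset α) (E : Finset (Sym2 α)) :
    Set (Sym2 α) :=
  {e | e ∈ E ∧ ∀ x ∈ e, x ∈ newT C i T ∪ Vv} ∪
  {e | ∃ w, s(C.cw i, w) ∈ E ∧ (e = s(C.cu i, w) ∨ e = s(C.cv i, w))}

/-- `D' = range(f') ∩ T'`. -/
noncomputable def rangeD {k : ℕ} (C : ContractionSeq α n) (i : ℕ) (T : Finset α)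
    (f' : Fin k → α) : Finset α :=
  (newT C i T).filter (fun u => ∃ a, f' a = u)

/-- An `f'`-decomposition `{(Tⱼ, Dⱼ, Vⱼ, Eⱼ, fⱼ, H) : j ∈ [m]}` of the virtual
`i`-profile `(T, D, V, E, f, H)`. -/
def IsVDecomp (C : ContractionSeq α n) (k d i : ℕ)
    (T D Vv : Finset α) (E : Finset (Sym2 α)) (f h : Fin k → α) (HE : Finset (Sym2 α))
    (f' : Fin k → α) (m : ℕ) (Tj Dj Vj : Fin m → Finset α)
    (Ej : Fin m → Finset (Sym2 α)) (fj : Fin m → Fin k → α) : Prop :=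
  IsDDecomp C k d i T D (rangeD C i T f') m Tj Dj ∧
  (∀ j, IsVirtualProfile C k d (i - 1) (Tj j) (Dj j) (Vj j) (Ej j) (fj j) h HE) ∧
  (∀ j, Vj j =
    Vv ∪ (Finset.univ.filter (fun a => f' a ∈ rangeD C i T f' \ Dj j)).image h) ∧
  (∀ j a, (f' a ∈ Dj j ∪ Vv → fj j a = f' a) ∧
          (f' a ∈ rangeD C i T f' \ Dj j → fj j a = h a)) ∧
  (∀ j e, e ∈ Ej j ↔
    ((e ∈ Eprime C i T Vv E ∧ ∀ x ∈ e, x ∈ Vv ∪ Tj j) ∨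
     (∃ u a, e = s(u, h a) ∧ u ∈ Vv ∪ Tj j ∧ f' a ∈ rangeD C i T f' \ Dj j ∧
        (s(u, f' a) ∈ Eprime C i T Vv E ∨ (C.seq (i - 1)).black u (f' a))) ∨
     (∃ a b, e = s(h a, h b) ∧ s(h a, h b) ∈ HE ∧
        f' a ∈ rangeD C i T f' \ Dj j ∧ f' b ∈ rangeD C i T f' \ Dj j)))

/-- `⊕_{j ∈ [m]} sⱼ = s¹ ⊕ (s² ⊕ ( … ))`, where the `a`-th entry of `s¹ ⊕ s²` is
`s¹ a` if `f₁ a ∈ D₁` and `s² a` otherwise. -/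
noncomputable def bigOplus {k : ℕ} [Nonempty α] :
    (m : ℕ) → (Fin m → Fin k → α) → (Fin m → Fin k → α) → (Fin m → Finset α) →
      Fin k → α
  | 0, _, _, _ => fun _ => Classical.arbitrary α
  | 1, sol, _, _ => sol 0
  | m + 2, sol, f, D => fun a =>
      if f 0 a ∈ D 0 then sol 0 a
      else bigOplus (m + 1) (fun j => sol j.succ) (fun j => f j.succ)
        (fun j => D j.succ) a

/-!
A vertex `w ∈ D_ℓ` has `f'(w) ≠ 0`, so the solution `S` meets `β(w)`. Contractions never
create black edges, so a black edge `uw` of `G_{i-1}` joins every vertex of `β(u)` to every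
vertex of `β(w)` in `G`; in particular each vertex of `β(u)` is adjacent to a vertex of `S`.
-/

/-- `x₀` is one of the vertices merged into `x` when `u, v` are contracted into `w`. -/
def ContractedFrom (u v w x₀ x : α) : Prop :=
  if x = w then x₀ = u ∨ x₀ = v else x₀ = x

theorem Contracts.black_of_black_of_ne {G G' : Trigraph α} {u v w : α}
    (hc : Contracts G G' u v w) {x y : α} (hxy : G'.black x y) (hxw : x ≠ w) {y₀ : α}
    (hy₀ : ContractedFrom u v w y₀ y) : G.black x y₀ := by
  obtain ⟨-, -, -, -, hverts, hblack_new, -, hblack_old⟩ := hc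
  have hx : x ∈ G.verts \ {u, v} := by
    have := (G'.black_mem x y hxy).1
    rwa [hverts, Finset.mem_insert, or_iff_right hxw] at this
  unfold ContractedFrom at hy₀
  split_ifs at hy₀ with hyw
  · subst hyw
    have huv := (hblack_new x hx).1 (G'.black_symm _ _ hxy)
    rcases hy₀ with rfl | rfl
    exacts [G.black_symm _ _ huv.1, G.black_symm _ _ huv.2]
  · subst hy₀
    have hy : y₀ ∈ G.verts \ {u, v} := by
      have := (G'.black_mem x y₀ hxy).2
      rwa [hverts, Finset.mem_insert, or_iff_right hyw] at this
    exact ((hblack_old x hx y₀ hy).1).1 hxy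

theorem Contracts.black_of_black {G G' : Trigraph α} {u v w : α}
    (hc : Contracts G G' u v w) {x y : α} (hxy : G'.black x y) {x₀ y₀ : α}
    (hx₀ : ContractedFrom u v w x₀ x) (hy₀ : ContractedFrom u v w y₀ y) : G.black x₀ y₀ := by
  by_cases hxw : x = w
  · have hyw : y ≠ w := fun hyw => G'.black_irrefl x (by rwa [hxw, ← hyw] at hxy ⊢)
    simp only [ContractedFrom, if_neg hyw] at hy₀
    subst hy₀
    exact G.black_symm _ _ (hc.black_of_black_of_ne (G'.black_symm _ _ hxy) hyw hx₀)
  · simp only [ContractedFrom, if_neg hxw] at hx₀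
    subst hx₀
    exact hc.black_of_black_of_ne hxy hxw hy₀

namespace ContractionSeq

variable (C : ContractionSeq α n)

theorem exists_contractedFrom_of_mem_bag_succ {i : ℕ} (hi : 1 ≤ i) {x a : α}
    (ha : a ∈ C.bag (i + 1) x) :
    ∃ x₀, ContractedFrom (C.cu (i + 1)) (C.cv (i + 1)) (C.cw (i + 1)) x₀ x ∧
      a ∈ C.bag i x₀ := by
  obtain ⟨i, rfl⟩ := Nat.exists_eq_add_of_le' hi
  simp only [bag, ContractedFrom] at ha ⊢
  split_ifs at ha ⊢
  · rcases Finset.mem_union.mp ha with ha | ha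
    exacts [⟨_, Or.inl rfl, ha⟩, ⟨_, Or.inr rfl, ha⟩]
  · exact ⟨x, rfl, ha⟩

theorem black_of_mem_bag {i : ℕ} (hi : 1 ≤ i) (hin : i ≤ n) {x y : α}
    (hxy : (C.seq i).black x y) {a b : α} (ha : a ∈ C.bag i x) (hb : b ∈ C.bag i y) :
    (C.seq 1).black a b := by
  induction i, hi using Nat.le_induction generalizing x y with
  | base =>
    simp only [bag, Finset.mem_singleton] at ha hb
    subst ha hb
    exact hxy
  | succ i hi ih =>
    obtain ⟨x₀, hx₀, ha₀⟩ := C.exists_contractedFrom_of_mem_bag_succ hi ha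
    obtain ⟨y₀, hy₀, hb₀⟩ := C.exists_contractedFrom_of_mem_bag_succ hi hb
    have hc := C.step (i + 1) (by omega) hin
    rw [Nat.add_sub_cancel] at hc
    exact ih (by omega) (hc.black_of_black hxy hx₀ hy₀) ha₀ hb₀

end ContractionSeq

theorem IsFDecomp.mem_Dset {C : ContractionSeq α n} {k d i : ℕ} {T D M : Finset α}
    {f' : α → ℕ} {m : ℕ} {Tj Dj Mj : Fin m → Finset α} {fj : Fin m → α → ℕ}
    (hdec : IsFDecomp C k d i T D M f' m Tj Dj Mj fj) {ℓ : Fin m} {w : α} (hw : w ∈ Dj ℓ) :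
    w ∈ Dset C i T f' := by
  rw [hdec.2.2.1]
  exact Finset.mem_biUnion.mpr ⟨ℓ, Finset.mem_univ _, hw⟩

theorem black_neighbor_dominated_general {α : Type} [DecidableEq α] {n : ℕ}
    (C : ContractionSeq α n) (d k : ℕ)
    (i : ℕ) (h2 : 2 ≤ i) (hin : i ≤ n)
    (T D M : Finset α)
    (f' : α → ℕ)
    (m : ℕ) (Tj Dj Mj : Fin m → Finset α) (fj : Fin m → α → ℕ)
    (hdec : IsFDecomp C k d i T D M f' m Tj Dj Mj fj)
    (S : Finset α)
    (hSf' : ∀ u ∈ newT C i T, (S ∩ C.bag (i - 1) u).card = f' u) :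
    ∀ j, ∀ u ∈ Tj j, (∃ ℓ, ∃ w ∈ Dj ℓ, (C.seq (i - 1)).black u w) →
      ↑(C.bag (i - 1) u) ⊆ closedNbhd C S := by
  rintro j u - ⟨ℓ, w, hwD, huw⟩ x hx
  obtain ⟨hwT', hf'w⟩ := Finset.mem_filter.mp (hdec.mem_Dset hwD)
  obtain ⟨s, hs⟩ : (S ∩ C.bag (i - 1) w).Nonempty := by
    rw [← Finset.card_ne_zero, hSf' w hwT']
    exact hf'w
  obtain ⟨hsS, hsw⟩ := Finset.mem_inter.mp hs
  exact Or.inr ⟨s, hsS, C.black_of_mem_bag (by omega) (by omega) huw hx hsw⟩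

/-- (Lemma 8b.) If `u ∈ Tⱼ` has a black neighbor in `G_{i-1}`
belonging to some `D_ℓ`, then `β(u) ⊆ N[S]`. -/
theorem black_neighbor_dominated {α : Type} [DecidableEq α] {n : ℕ}
    (C : ContractionSeq α n) (d k : ℕ) (hW : C.HasWidth d)
    (i : ℕ) (h2 : 2 ≤ i) (hin : i ≤ n)
    (T D M : Finset α) (f : α → ℕ) (hπ : IsExtProfile C k d i T D M f)
    (hv : C.cw i ∈ T)
    (f' : α → ℕ) (hf' : FCompat C k i T f f')
    (m : ℕ) (Tj Dj Mj : Fin m → Finset α) (fj : Fin m → α → ℕ)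
    (hdec : IsFDecomp C k d i T D M f' m Tj Dj Mj fj)
    (S : Finset α) (hS : IsSolution C i T f S)
    (hSf' : ∀ u ∈ newT C i T, (S ∩ C.bag (i - 1) u).card = f' u) :
    ∀ j, ∀ u ∈ Tj j, (∃ ℓ, ∃ w ∈ Dj ℓ, (C.seq (i - 1)).black u w) →
      ↑(C.bag (i - 1) u) ⊆ closedNbhd C S :=
  black_neighbor_dominated_general C d k i h2 hin T D M f' m Tj Dj Mj fj hdec S hSf'
end

section
/- Let G be a graph with a contraction sequence (G = G_1, ..., G_n) of width d and let k be a natural number. Let i in [2, n], let π = (T, D, M, f) be an extended i-profile with v in T (where v is the new vertex of G_i), let f' be compatible with π, let {(T_j, D_j, M_j, f_j) : j in [m]} be an f'-decomposition of π, and for each j in [m] let S_j be a solution of (T_j, D_j, M_j, f_j) with dominating-set-value ν_j. Let S = ∪_{j∈[m]} S_j, let M-hat be as in the compatibility definition, and for each j in [m] let C_j = {u ∈ M-hat ∩ T_j : u has a black neighbor in G_{i-1} belonging to D_ℓ for some ℓ in [m]}. Then S is a solution of π and the dominating-set-value of S in π equals Σ_{j∈[m]} ( ν_j + Σ_{u∈C_j}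 |beta(u)| ). -/
attribute [local instance 10] Classical.propDecidable

variable {α : Type} [DecidableEq α]

variable {n : ℕ}

/-!
The bags of distinct vertices of `Gᵢ₋₁` are disjoint, a black edge of `Gᵢ₋₁` joins every
vertex of one bag to every vertex of the other in `G`, and two vertices of `Gᵢ₋₁` that are
neither black nor red neighbours have no edge of `G` between their bags. Since each `Sⱼ` lies in
`β(Tⱼ)` and the `Tⱼ` are disjoint, `S` meets the bag of every `u ∈ Tⱼ` exactly in `Sⱼ`, which
makes `S` a solution of `π`. For the value, `M-hat ∩ Tⱼ` splits into `Mⱼ` and `Cⱼ`. A vertex of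
`Cⱼ` is a black neighbour of some `w ∈ D_ℓ`, whose bag meets `S`, so its whole bag is
dominated. On the bag of a vertex of `Mⱼ`, `S` dominates exactly what `Sⱼ` dominates.
-/

def contractFiber (u v w x : α) : Finset α :=
  if x = w then {u, v} else {x}

lemma mem_contractFiber_self {u v w x' : α} : x' ∈ contractFiber u v w w ↔ x' = u ∨ x' = v := by
  simp [contractFiber]

lemma contractFiber_of_ne {u v w x : α} (hxw : x ≠ w) : contractFiber u v w x = {x} :=
  if_neg hxw

namespace Contracts

variable {G G' : Trigraph α} {u v w x y x' y' : α}

lemma mem_sdiff_of_ne (h : Contracts G G' u v w) (hx : x ∈ G'.verts) (hxw : x ≠ w) :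
    x ∈ G.verts \ {u, v} := by
  rw [h.2.2.2.2.1] at hx
  exact (Finset.mem_insert.1 hx).resolve_left hxw

lemma fiber_subset_verts (h : Contracts G G' u v w) (hx : x ∈ G'.verts) :
    contractFiber u v w x ⊆ G.verts := by
  unfold contractFiber
  split_ifs with hxw
  · exact Finset.insert_subset h.1 (Finset.singleton_subset_iff.2 h.2.1)
  · exact Finset.singleton_subset_iff.2 (Finset.mem_sdiff.1 (h.mem_sdiff_of_ne hx hxw)).1

lemma disjoint_fiber (h : Contracts G G' u v w) (hx : x ∈ G'.verts) (hy : y ∈ G'.verts)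
    (hxy : x ≠ y) : Disjoint (contractFiber u v w x) (contractFiber u v w y) := by
  unfold contractFiber
  split_ifs with hxw hyw hyw
  · exact absurd (hxw.trans hyw.symm) hxy
  · exact Finset.disjoint_singleton_right.2 (Finset.mem_sdiff.1 (h.mem_sdiff_of_ne hy hyw)).2
  · exact Finset.disjoint_singleton_left.2 (Finset.mem_sdiff.1 (h.mem_sdiff_of_ne hx hxw)).2
  · exact Finset.disjoint_singleton.2 hxy

lemma black_of_mem_fiber_of_ne (h : Contracts G G' u v w) (hxw : x ≠ w) (hxy : G'.black x y)
    (hx' : x' ∈ contractFiber u v w x) (hy' : y' ∈ contractFiber u v w y) : G.black x' y' := by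
  obtain ⟨hx, hy⟩ := G'.black_mem x y hxy
  have hxo := h.mem_sdiff_of_ne hx hxw
  rw [contractFiber_of_ne hxw, Finset.mem_singleton] at hx'
  subst hx'
  by_cases hyw : y = w
  · rw [hyw, mem_contractFiber_self] at hy'
    rw [hyw] at hxy
    have hyx := (h.2.2.2.2.2.1 x' hxo).1 (G'.black_symm _ _ hxy)
    rcases hy' with rfl | rfl
    exacts [G.black_symm _ _ hyx.1, G.black_symm _ _ hyx.2]
  · rw [contractFiber_of_ne hyw, Finset.mem_singleton] at hy'
    subst hy'
    exact (h.2.2.2.2.2.2.2 x' hxo y' (h.mem_sdiff_of_ne hy hyw)).1.1 hxy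

lemma black_of_mem_fiber (h : Contracts G G' u v w) (hxy : G'.black x y)
    (hx' : x' ∈ contractFiber u v w x) (hy' : y' ∈ contractFiber u v w y) : G.black x' y' := by
  by_cases hxw : x = w
  · have hyw : y ≠ w := by
      rintro rfl
      exact G'.black_irrefl y (hxw ▸ hxy)
    exact G.black_symm _ _ (h.black_of_mem_fiber_of_ne hyw (G'.black_symm _ _ hxy) hy' hx')
  · exact h.black_of_mem_fiber_of_ne hxw hxy hx' hy'

lemma adj_of_mem_fiber_of_ne (h : Contracts G G' u v w) (hx : x ∈ G'.verts) (hy : y ∈ G'.verts)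
    (hxy : x ≠ y) (hxw : x ≠ w) (hx' : x' ∈ contractFiber u v w x)
    (hy' : y' ∈ contractFiber u v w y) (hadj : G.black x' y' ∨ G.red x' y') :
    G'.black x y ∨ G'.red x y := by
  have hxo := h.mem_sdiff_of_ne hx hxw
  rw [contractFiber_of_ne hxw, Finset.mem_singleton] at hx'
  subst hx'
  by_cases hyw : y = w
  · rw [hyw, mem_contractFiber_self] at hy'
    rw [hyw]
    have hadj' : G.black u x' ∨ G.red u x' ∨ G.black v x' ∨ G.red v x' := by
      rcases hy' with rfl | rfl <;> rcases hadj with hb | hr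
      exacts [Or.inl (G.black_symm _ _ hb), Or.inr (Or.inl (G.red_symm _ _ hr)),
        Or.inr (Or.inr (Or.inl (G.black_symm _ _ hb))),
        Or.inr (Or.inr (Or.inr (G.red_symm _ _ hr)))]
    by_cases hboth : G.black u x' ∧ G.black v x'
    · exact Or.inl (G'.black_symm _ _ ((h.2.2.2.2.2.1 x' hxo).2 hboth))
    · exact Or.inr (G'.red_symm _ _ ((h.2.2.2.2.2.2.1 x' hxo).2 ⟨hboth, hadj'⟩))
  · rw [contractFiber_of_ne hyw, Finset.mem_singleton] at hy'
    subst hy'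
    have hold := h.2.2.2.2.2.2.2 x' hxo y' (h.mem_sdiff_of_ne hy hyw)
    exact hadj.imp hold.1.2 hold.2.2

lemma adj_of_mem_fiber (h : Contracts G G' u v w) (hx : x ∈ G'.verts) (hy : y ∈ G'.verts)
    (hxy : x ≠ y) (hx' : x' ∈ contractFiber u v w x) (hy' : y' ∈ contractFiber u v w y)
    (hadj : G.black x' y' ∨ G.red x' y') : G'.black x y ∨ G'.red x y := by
  by_cases hxw : x = w
  · have hyw : y ≠ w := fun hyw => hxy (hxw.trans hyw.symm)
    have hadj' := hadj.imp (G.black_symm _ _) (G.red_symm _ _)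
    exact (h.adj_of_mem_fiber_of_ne hy hx (Ne.symm hxy) hyw hy' hx' hadj').imp
      (G'.black_symm _ _) (G'.red_symm _ _)
  · exact h.adj_of_mem_fiber_of_ne hx hy hxy hxw hx' hy' hadj

end Contracts

open Function

lemma Pairwise.eq_of_mem_of_mem {ι β : Type*} {T : ι → Finset β} (hT : Pairwise (Disjoint on T))
    {j ℓ : ι} {u : β} (hj : u ∈ T j) (hℓ : u ∈ T ℓ) : j = ℓ :=
  by_contra fun hne => Finset.disjoint_left.1 (hT hne) hj hℓ

namespace ContractionSeq

variable (C : ContractionSeq α n)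

def fiber (i : ℕ) : α → Finset α :=
  contractFiber (C.cu i) (C.cv i) (C.cw i)

lemma bag_one (x : α) : C.bag 1 x = {x} := rfl

lemma bag_eq_biUnion_fiber {i : ℕ} (h2 : 2 ≤ i) (x : α) :
    C.bag i x = (C.fiber i x).biUnion (C.bag (i - 1)) := by
  obtain ⟨p, rfl⟩ : ∃ p, i = p + 2 := ⟨i - 2, by omega⟩
  simp only [bag, fiber, contractFiber]
  split_ifs <;> simp [Finset.biUnion_insert]

lemma bags_eq_bags_biUnion_fiber {i : ℕ} (h2 : 2 ≤ i) (A : Finset α) :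
    C.bags i A = C.bags (i - 1) (A.biUnion (C.fiber i)) := by
  rw [bags, bags, Finset.biUnion_biUnion]
  exact Finset.biUnion_congr rfl fun x _ => C.bag_eq_biUnion_fiber h2 x

lemma contracts_succ {j : ℕ} (h1 : 1 ≤ j) (hj : j + 1 ≤ n) :
    Contracts (C.seq j) (C.seq (j + 1)) (C.cu (j + 1)) (C.cv (j + 1)) (C.cw (j + 1)) := by
  simpa using C.step (j + 1) (by omega) hj

lemma mem_bag_succ_iff {j : ℕ} (h1 : 1 ≤ j) {x y : α} :
    y ∈ C.bag (j + 1) x ↔ ∃ x' ∈ C.fiber (j + 1) x, y ∈ C.bag j x' := by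
  rw [C.bag_eq_biUnion_fiber (by omega : 2 ≤ j + 1), Finset.mem_biUnion, Nat.add_sub_cancel]

lemma disjoint_bag {j : ℕ} (h1 : 1 ≤ j) (hj : j ≤ n) {u w : α} (hu : u ∈ (C.seq j).verts)
    (hw : w ∈ (C.seq j).verts) (huw : u ≠ w) : Disjoint (C.bag j u) (C.bag j w) := by
  induction j, h1 using Nat.le_induction generalizing u w with
  | base => exact Finset.disjoint_singleton.2 huw
  | succ j h1 ih =>
    have h := C.contracts_succ h1 hj
    refine Finset.disjoint_left.2 fun x hxu hxw => ?_
    obtain ⟨u', hu', hxu'⟩ := (C.mem_bag_succ_iff h1).1 hxu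
    obtain ⟨w', hw', hxw'⟩ := (C.mem_bag_succ_iff h1).1 hxw
    have hne : u' ≠ w' := by
      rintro rfl
      exact Finset.disjoint_left.1 (h.disjoint_fiber hu hw huw) hu' hw'
    exact Finset.disjoint_left.1 (ih (by omega) (h.fiber_subset_verts hu hu')
      (h.fiber_subset_verts hw hw') hne) hxu' hxw'

lemma black_of_mem_bag_s11 {j : ℕ} (h1 : 1 ≤ j) (hj : j ≤ n) {u w x y : α}
    (huw : (C.seq j).black u w) (hx : x ∈ C.bag j u) (hy : y ∈ C.bag j w) :
    (C.seq 1).black x y := by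
  induction j, h1 using Nat.le_induction generalizing u w with
  | base =>
    rw [bag_one, Finset.mem_singleton] at hx hy
    rwa [hx, hy]
  | succ j h1 ih =>
    obtain ⟨u', hu', hxu'⟩ := (C.mem_bag_succ_iff h1).1 hx
    obtain ⟨w', hw', hyw'⟩ := (C.mem_bag_succ_iff h1).1 hy
    exact ih (by omega) ((C.contracts_succ h1 hj).black_of_mem_fiber huw hu' hw') hxu' hyw'

lemma adj_of_black_mem_bag {j : ℕ} (h1 : 1 ≤ j) (hj : j ≤ n) {u w x y : α}
    (hu : u ∈ (C.seq j).verts) (hw : w ∈ (C.seq j).verts) (huw : u ≠ w)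
    (hx : x ∈ C.bag j u) (hy : y ∈ C.bag j w) (hxy : (C.seq 1).black x y) :
    (C.seq j).black u w ∨ (C.seq j).red u w := by
  induction j, h1 using Nat.le_induction generalizing u w with
  | base =>
    rw [bag_one, Finset.mem_singleton] at hx hy
    exact Or.inl (hx ▸ hy ▸ hxy)
  | succ j h1 ih =>
    have h := C.contracts_succ h1 hj
    obtain ⟨u', hu', hxu'⟩ := (C.mem_bag_succ_iff h1).1 hx
    obtain ⟨w', hw', hyw'⟩ := (C.mem_bag_succ_iff h1).1 hy
    have hne : u' ≠ w' := by
      rintro rfl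
      exact Finset.disjoint_left.1 (h.disjoint_fiber hu hw huw) hu' hw'
    exact h.adj_of_mem_fiber hu hw huw hu' hw' (ih (by omega) (h.fiber_subset_verts hu hu')
      (h.fiber_subset_verts hw hw') hne hxu' hyw')

end ContractionSeq

namespace ContractionSeq

variable (C : ContractionSeq α n)

lemma fiber_cw (i : ℕ) : C.fiber i (C.cw i) = {C.cu i, C.cv i} :=
  if_pos rfl

lemma fiber_of_ne {i : ℕ} {x : α} (hx : x ≠ C.cw i) : C.fiber i x = {x} :=
  contractFiber_of_ne hx

lemma biUnion_fiber_of_not_mem {i : ℕ} {A : Finset α} (hA : C.cw i ∉ A) :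
    A.biUnion (C.fiber i) = A := by
  conv_rhs => rw [← Finset.biUnion_singleton_eq_self (s := A)]
  exact Finset.biUnion_congr rfl fun x hx => C.fiber_of_ne fun h => hA (h ▸ hx)

lemma newT_eq_biUnion_fiber {i : ℕ} {A : Finset α} (hA : C.cw i ∈ A) :
    newT C i A = A.biUnion (C.fiber i) := by
  rw [newT, ← C.biUnion_fiber_of_not_mem (Finset.notMem_erase (C.cw i) A), ← C.fiber_cw,
    Finset.union_comm, ← Finset.biUnion_insert, Finset.insert_erase hA]

lemma Mhat_eq_biUnion_fiber (i : ℕ) (M : Finset α) : Mhat C i M = M.biUnion (C.fiber i) := by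
  unfold Mhat
  split_ifs with hM
  · exact C.newT_eq_biUnion_fiber hM
  · exact (C.biUnion_fiber_of_not_mem hM).symm

lemma dsValue_eq_sum {p : ℕ} (h1 : 1 ≤ p) (hp : p ≤ n) {M : Finset α}
    (hM : M ⊆ (C.seq p).verts) (S : Finset α) :
    dsValue C p M S = ∑ u ∈ M, ((C.bag p u).filter (· ∈ closedNbhd C S)).card := by
  have hfilter : closedNbhd C S ∩ ↑(C.bags p M) =
      ↑((C.bags p M).filter (· ∈ closedNbhd C S)) := by
    ext x
    simp [and_comm]
  rw [dsValue, hfilter, Set.ncard_coe_finset, bags, Finset.filter_biUnion, Finset.card_biUnion]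
  intro u hu w hw huw
  exact Finset.disjoint_filter_filter (C.disjoint_bag h1 hp (hM hu) (hM hw) huw)

lemma dsValue_eq_dsValue_Mhat {i : ℕ} (h2 : 2 ≤ i) (M S : Finset α) :
    dsValue C i M S = dsValue C (i - 1) (Mhat C i M) S := by
  rw [dsValue, dsValue, C.bags_eq_bags_biUnion_fiber h2, Mhat_eq_biUnion_fiber]

lemma index_eq_of_mem_bag {ι : Type*} {p : ℕ} (h1 : 1 ≤ p) (hp : p ≤ n) {Tj Sj : ι → Finset α}
    (hT : Pairwise (Disjoint on Tj)) (hTv : ∀ j, Tj j ⊆ (C.seq p).verts)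
    (hS : ∀ j, Sj j ⊆ C.bags p (Tj j)) {j ℓ : ι} {u x : α} (hu : u ∈ Tj j)
    (hx : x ∈ C.bag p u) (hxS : x ∈ Sj ℓ) : ℓ = j := by
  obtain ⟨w, hw, hxw⟩ := Finset.mem_biUnion.1 (hS ℓ hxS)
  obtain rfl : w = u := by
    by_contra hne
    exact Finset.disjoint_left.1 (C.disjoint_bag h1 hp (hTv ℓ hw) (hTv j hu) hne) hxw hx
  exact hT.eq_of_mem_of_mem hw hu

end ContractionSeq

lemma FCompat.eq_sum_fiber {C : ContractionSeq α n} {k i : ℕ} {T : Finset α} {f f' : α → ℕ}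
    (hf' : FCompat C k i T f f') (huv : C.cu i ≠ C.cv i) {u : α} (hu : u ∈ T) :
    f u = ∑ u' ∈ C.fiber i u, f' u' := by
  by_cases huw : u = C.cw i
  · rw [huw, C.fiber_cw, Finset.sum_pair huv]
    exact hf'.2.2.1
  · rw [C.fiber_of_ne huw, Finset.sum_singleton]
    exact (hf'.2.2.2.2.2 u (Finset.mem_erase.2 ⟨huw, hu⟩)).symm

namespace IsSolution

variable {C : ContractionSeq α n} {k d p : ℕ} {T D M S : Finset α} {f : α → ℕ}

lemma exists_mem_bag (hS : IsSolution C p T f S) (hπ : IsExtProfile C k d p T D M f) {y : α}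
    (hy : y ∈ S) : ∃ w ∈ D, y ∈ C.bag p w := by
  obtain ⟨w, hw, hyw⟩ := Finset.mem_biUnion.1 (hS.1 hy)
  refine ⟨w, ?_, hyw⟩
  rw [hπ.2.2.2.2.2.2, Finset.mem_filter, hS.2 w hw]
  exact ⟨hw, Finset.card_ne_zero.2 ⟨y, Finset.mem_inter.2 ⟨hy, hyw⟩⟩⟩

lemma exists_mem_inter_bag (hS : IsSolution C p T f S) (hπ : IsExtProfile C k d p T D M f)
    {w : α} (hw : w ∈ D) : ∃ y ∈ S, y ∈ C.bag p w := by
  rw [hπ.2.2.2.2.2.2, Finset.mem_filter] at hw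
  rw [hS.2 w hw.1] at hw
  obtain ⟨y, hy⟩ := Finset.card_ne_zero.1 hw.2
  exact ⟨y, (Finset.mem_inter.1 hy).1, (Finset.mem_inter.1 hy).2⟩

end IsSolution

namespace IsFDecomp

variable {C : ContractionSeq α n} {k d i : ℕ} {T D M : Finset α} {f' : α → ℕ} {m : ℕ}
  {Tj Dj Mj : Fin m → Finset α} {fj : Fin m → α → ℕ} {Sj : Fin m → Finset α}

lemma pairwise_disjoint (hdec : IsFDecomp C k d i T D M f' m Tj Dj Mj fj) :
    Pairwise (Disjoint on Tj) :=
  fun j ℓ => hdec.2.2.2.2.2.1 j ℓ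

lemma subset_verts (hdec : IsFDecomp C k d i T D M f' m Tj Dj Mj fj) (j : Fin m) :
    Tj j ⊆ (C.seq (i - 1)).verts :=
  (hdec.1 j).1.1

lemma biUnion_fiber_eq (hdec : IsFDecomp C k d i T D M f' m Tj Dj Mj fj) (hv : C.cw i ∈ T) :
    T.biUnion (C.fiber i) = Finset.univ.biUnion Tj :=
  (C.newT_eq_biUnion_fiber hv).symm.trans hdec.2.2.2.2.2.2.1

lemma biUnion_inter_bag (hdec : IsFDecomp C k d i T D M f' m Tj Dj Mj fj) (h2 : 2 ≤ i)
    (hin : i ≤ n) (hSj : ∀ j, IsSolution C (i - 1) (Tj j) (fj j) (Sj j)) {j : Fin m} {u : α}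
    (hu : u ∈ Tj j) : Finset.univ.biUnion Sj ∩ C.bag (i - 1) u = Sj j ∩ C.bag (i - 1) u := by
  ext x
  simp only [Finset.mem_inter, Finset.mem_biUnion, Finset.mem_univ, true_and]
  constructor
  · rintro ⟨⟨ℓ, hxℓ⟩, hx⟩
    obtain rfl := C.index_eq_of_mem_bag (by omega) (by omega) hdec.pairwise_disjoint
      hdec.subset_verts (fun j => (hSj j).1) hu hx hxℓ
    exact ⟨hxℓ, hx⟩
  · exact fun ⟨hx, hxu⟩ => ⟨⟨j, hx⟩, hxu⟩

lemma isSolution_biUnion (hdec : IsFDecomp C k d i T D M f' m Tj Dj Mj fj) (h2 : 2 ≤ i)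
    (hin : i ≤ n) (hv : C.cw i ∈ T) {f : α → ℕ} (hf' : FCompat C k i T f f')
    (hSj : ∀ j, IsSolution C (i - 1) (Tj j) (fj j) (Sj j)) :
    IsSolution C i T f (Finset.univ.biUnion Sj) := by
  have hT' := hdec.biUnion_fiber_eq hv
  refine ⟨?_, fun u hu => ?_⟩
  · rw [C.bags_eq_bags_biUnion_fiber h2, hT', ContractionSeq.bags, Finset.biUnion_biUnion]
    exact Finset.biUnion_mono fun j _ => (hSj j).1
  have hfiber : ∀ u' ∈ C.fiber i u, ∃ j, u' ∈ Tj j := fun u' hu' => by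
    have h := Finset.mem_biUnion.2 ⟨u, hu, hu'⟩
    rw [hT'] at h
    simpa using h
  rw [hf'.eq_sum_fiber (C.step i h2 hin).2.2.1 hu, C.bag_eq_biUnion_fiber h2,
    Finset.inter_biUnion, Finset.card_biUnion]
  · refine Finset.sum_congr rfl fun u' hu' => ?_
    obtain ⟨j, hj⟩ := hfiber u' hu'
    rw [hdec.biUnion_inter_bag h2 hin hSj hj, ← (hSj j).2 u' hj, hdec.2.1 j u' hj]
  · intro u' hu' w' hw' hne
    obtain ⟨j, hj⟩ := hfiber u' hu'
    obtain ⟨ℓ, hℓ⟩ := hfiber w' hw'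
    exact (C.disjoint_bag (by omega) (by omega) (hdec.subset_verts j hj)
      (hdec.subset_verts ℓ hℓ) hne).mono Finset.inter_subset_right Finset.inter_subset_right

lemma Mj_eq_filter (hdec : IsFDecomp C k d i T D M f' m Tj Dj Mj fj) (j : Fin m) :
    Mj j = (Mhat C i M ∩ Tj j).filter
      (fun u => ¬ ∃ ℓ, ∃ w ∈ Dj ℓ, (C.seq (i - 1)).black u w) := by
  have hdisj := hdec.pairwise_disjoint
  obtain ⟨hext, -, hD, hM, -⟩ := hdec
  have hmem : ∀ u, u ∈ Mj j ↔ u ∈ Mset C i M (Dset C i T f') ∧ u ∈ Tj j := fun u => by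
    rw [hM, Finset.mem_biUnion]
    refine ⟨fun hu => ⟨⟨j, Finset.mem_univ j, hu⟩, (hext j).2.1 hu⟩, ?_⟩
    rintro ⟨⟨ℓ, -, huℓ⟩, hu⟩
    rwa [← hdisj.eq_of_mem_of_mem ((hext ℓ).2.1 huℓ) hu]
  ext u
  simp only [hmem, Mset, hD, Finset.mem_filter, Finset.mem_inter, Finset.mem_biUnion,
    Finset.mem_univ, true_and]
  grind

lemma mem_closedNbhd_biUnion_iff_of_mem_Mj (hdec : IsFDecomp C k d i T D M f' m Tj Dj Mj fj)
    (h2 : 2 ≤ i) (hin : i ≤ n) (hSj : ∀ j, IsSolution C (i - 1) (Tj j) (fj j) (Sj j))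
    {j : Fin m} {u x : α} (hu : u ∈ Mj j) (hx : x ∈ C.bag (i - 1) u) :
    x ∈ closedNbhd C (Finset.univ.biUnion Sj) ↔ x ∈ closedNbhd C (Sj j) := by
  have huT : u ∈ Tj j := (hdec.1 j).2.1 hu
  rw [hdec.Mj_eq_filter j, Finset.mem_filter] at hu
  have hindex : ∀ ℓ, x ∈ Sj ℓ → ℓ = j := fun ℓ hxℓ =>
    C.index_eq_of_mem_bag (by omega) (by omega) hdec.pairwise_disjoint hdec.subset_verts
      (fun j => (hSj j).1) huT hx hxℓ
  -- A neighbour `y ∈ S_ℓ` of `x` lies in the bag of some `w ∈ D_ℓ`; for `ℓ ≠ j`, `w` is neither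
  -- a black neighbour of `u` (as `u ∈ M'`) nor a red one (by the decomposition).
  have hnbr : ∀ ℓ, ∀ y ∈ Sj ℓ, (C.seq 1).black x y → ℓ = j := by
    intro ℓ y hy hxy
    obtain ⟨w, hw, hyw⟩ := (hSj ℓ).exists_mem_bag (hdec.1 ℓ) hy
    have hwT : w ∈ Tj ℓ := (hdec.1 ℓ).1.2.2.2.1 hw
    by_contra hne
    have huw : u ≠ w := by
      rintro rfl
      exact hne (hdec.pairwise_disjoint.eq_of_mem_of_mem hwT huT)
    rcases C.adj_of_black_mem_bag (by omega) (by omega) (hdec.subset_verts j huT)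
      (hdec.subset_verts ℓ hwT) huw hx hyw hxy with hb | hr
    · exact hu.2 ⟨ℓ, w, hw, hb⟩
    · exact hdec.2.2.2.2.2.2.2.2.2 j ℓ (Ne.symm hne) u huT w hw hr
  simp only [closedNbhd, Set.mem_union, Finset.mem_coe, Set.mem_ofPred_eq, Finset.mem_biUnion,
    Finset.mem_univ, true_and]
  constructor
  · rintro (⟨ℓ, hxℓ⟩ | ⟨y, ⟨ℓ, hyℓ⟩, hxy⟩)
    · exact Or.inl (hindex ℓ hxℓ ▸ hxℓ)
    · exact Or.inr ⟨y, hnbr ℓ y hyℓ hxy ▸ hyℓ, hxy⟩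
  · rintro (hxj | ⟨y, hy, hxy⟩)
    exacts [Or.inl ⟨j, hxj⟩, Or.inr ⟨y, ⟨j, hy⟩, hxy⟩]

lemma mem_closedNbhd_biUnion_of_black (hdec : IsFDecomp C k d i T D M f' m Tj Dj Mj fj)
    (h2 : 2 ≤ i) (hin : i ≤ n) (hSj : ∀ j, IsSolution C (i - 1) (Tj j) (fj j) (Sj j))
    {u x : α} (hu : ∃ ℓ, ∃ w ∈ Dj ℓ, (C.seq (i - 1)).black u w) (hx : x ∈ C.bag (i - 1) u) :
    x ∈ closedNbhd C (Finset.univ.biUnion Sj) := by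
  obtain ⟨ℓ, w, hw, huw⟩ := hu
  obtain ⟨y, hy, hyw⟩ := (hSj ℓ).exists_mem_inter_bag (hdec.1 ℓ) hw
  exact Or.inr ⟨y, Finset.mem_biUnion.2 ⟨ℓ, Finset.mem_univ ℓ, hy⟩,
    C.black_of_mem_bag_s11 (by omega) (by omega) huw hx hyw⟩

lemma dsValue_biUnion (hdec : IsFDecomp C k d i T D M f' m Tj Dj Mj fj) (h2 : 2 ≤ i)
    (hin : i ≤ n) (hMT : M ⊆ T) (hv : C.cw i ∈ T)
    (hSj : ∀ j, IsSolution C (i - 1) (Tj j) (fj j) (Sj j)) :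
    dsValue C i M (Finset.univ.biUnion Sj) =
      ∑ j, (dsValue C (i - 1) (Mj j) (Sj j) +
        ∑ u ∈ (Mhat C i M ∩ Tj j).filter
            (fun u => ∃ ℓ, ∃ w ∈ Dj ℓ, (C.seq (i - 1)).black u w),
          (C.bag (i - 1) u).card) := by
  set S := Finset.univ.biUnion Sj
  have hMhat : Mhat C i M ⊆ Finset.univ.biUnion Tj := by
    rw [C.Mhat_eq_biUnion_fiber, ← hdec.biUnion_fiber_eq hv]
    exact Finset.biUnion_subset_biUnion_of_subset_left _ hMT
  have hverts : Finset.univ.biUnion Tj ⊆ (C.seq (i - 1)).verts :=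
    Finset.biUnion_subset.2 fun j _ => hdec.subset_verts j
  have hpd : Pairwise (Disjoint on fun j => Mhat C i M ∩ Tj j) := fun j ℓ hne =>
    (hdec.pairwise_disjoint hne).mono Finset.inter_subset_right Finset.inter_subset_right
  calc dsValue C i M S
      = ∑ u ∈ Mhat C i M, ((C.bag (i - 1) u).filter (· ∈ closedNbhd C S)).card := by
        rw [C.dsValue_eq_dsValue_Mhat h2,
          C.dsValue_eq_sum (by omega) (by omega) (hMhat.trans hverts)]
    _ = ∑ j, ∑ u ∈ Mhat C i M ∩ Tj j, ((C.bag (i - 1) u).filter (· ∈ closedNbhd C S)).card := by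
        rw [← Finset.sum_biUnion (hpd.pairwiseDisjoint _), ← Finset.inter_biUnion,
          Finset.inter_eq_left.2 hMhat]
    _ = _ := Finset.sum_congr rfl fun j _ => by
        rw [← Finset.sum_filter_add_sum_filter_not _
            (fun u => ∃ ℓ, ∃ w ∈ Dj ℓ, (C.seq (i - 1)).black u w), add_comm,
          ← hdec.Mj_eq_filter,
          C.dsValue_eq_sum (by omega) (by omega) ((hdec.1 j).2.1.trans (hdec.subset_verts j))]
        congr 1
        · refine Finset.sum_congr rfl fun u hu => congrArg Finset.card (Finset.filter_congr
            fun x hx => hdec.mem_closedNbhd_biUnion_iff_of_mem_Mj h2 hin hSj hu hx)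
        · refine Finset.sum_congr rfl fun u hu => congrArg Finset.card
            (Finset.filter_true_of_mem fun x hx =>
              hdec.mem_closedNbhd_biUnion_of_black h2 hin hSj (Finset.mem_filter.1 hu).2 hx)

end IsFDecomp

theorem dominating_value_of_union_general {α : Type} [DecidableEq α] {n : ℕ}
    (C : ContractionSeq α n) (d k : ℕ)
    (i : ℕ) (h2 : 2 ≤ i) (hin : i ≤ n)
    (T D M : Finset α) (f : α → ℕ) (hπ : IsExtProfile C k d i T D M f)
    (hv : C.cw i ∈ T)
    (f' : α → ℕ) (hf' : FCompat C k i T f f')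
    (m : ℕ) (Tj Dj Mj : Fin m → Finset α) (fj : Fin m → α → ℕ)
    (hdec : IsFDecomp C k d i T D M f' m Tj Dj Mj fj)
    (Sj : Fin m → Finset α) (νj : Fin m → ℕ)
    (hSj : ∀ j, IsSolution C (i - 1) (Tj j) (fj j) (Sj j))
    (hν : ∀ j, νj j = dsValue C (i - 1) (Mj j) (Sj j)) :
    IsSolution C i T f (Finset.univ.biUnion Sj) ∧
    dsValue C i M (Finset.univ.biUnion Sj) =
      ∑ j, (νj j +
        ∑ u ∈ (Mhat C i M ∩ Tj j).filter
            (fun u => ∃ ℓ, ∃ w ∈ Dj ℓ, (C.seq (i - 1)).black u w),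
          (C.bag (i - 1) u).card) := by
  simp only [hν]
  exact ⟨hdec.isSolution_biUnion h2 hin hv hf' hSj, hdec.dsValue_biUnion h2 hin hπ.2.1 hv hSj⟩

/-- (Lemma 9.) The union of solutions of the profiles of an
`f'`-decomposition of `π` is a solution of `π` whose dominating-set-value equals
`Σⱼ (νⱼ + Σ_{u ∈ Cⱼ} |β(u)|)`. -/
theorem dominating_value_of_union {α : Type} [DecidableEq α] {n : ℕ}
    (C : ContractionSeq α n) (d k : ℕ) (hW : C.HasWidth d)
    (i : ℕ) (h2 : 2 ≤ i) (hin : i ≤ n)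
    (T D M : Finset α) (f : α → ℕ) (hπ : IsExtProfile C k d i T D M f)
    (hv : C.cw i ∈ T)
    (f' : α → ℕ) (hf' : FCompat C k i T f f')
    (m : ℕ) (Tj Dj Mj : Fin m → Finset α) (fj : Fin m → α → ℕ)
    (hdec : IsFDecomp C k d i T D M f' m Tj Dj Mj fj)
    (Sj : Fin m → Finset α) (νj : Fin m → ℕ)
    (hSj : ∀ j, IsSolution C (i - 1) (Tj j) (fj j) (Sj j))
    (hν : ∀ j, νj j = dsValue C (i - 1) (Mj j) (Sj j)) :
    IsSolution C i T f (Finset.univ.biUnion Sj) ∧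
    dsValue C i M (Finset.univ.biUnion Sj) =
      ∑ j, (νj j +
        ∑ u ∈ (Mhat C i M ∩ Tj j).filter
            (fun u => ∃ ℓ, ∃ w ∈ Dj ℓ, (C.seq (i - 1)).black u w),
          (C.bag (i - 1) u).card) :=
  dominating_value_of_union_general C d k i h2 hin T D M f hπ hv f' hf' m Tj Dj Mj fj hdec Sj νj hSj
    hν
end

section
/- Let G be a graph with a contraction sequence (G = G_1, ..., G_n) of width d and let k be a natural number. Let i in [2, n], let π = (T, D, ∅, f) be an extended i-profile with v in T (where v is the new vertex of G_i), let f' be compatible with π, let {(T_j, D_j, ∅, f_j) : j in [m]} be an f'-decomposition of π, and let S be a solution of π satisfying |S ∩ beta(u)| = f'(u) for every u in T'. Then for all distinct j, ℓ in [m], the number of edges xy of G with x in beta(T_j), y in beta(T_ℓ), and x ∈ S or y ∈ S, equals Σ over pairs (u, w) with u in T_j, w in T_ℓ, uw a black edge of G_{i-1}, of f_j(u)·|beta(w)| + f_ℓ(w)·|beta(u)| − f_j(u)·f_ℓ(w). -/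
attribute [local instance 10] Classical.propDecidable

variable {α : Type} [DecidableEq α]

variable {n : ℕ}

/-! Along the contraction sequence the bags of distinct vertices of `Gⱼ` stay disjoint, a
black edge `xy` of `Gⱼ` means that all of `β(x) × β(y)` are edges of `G`, and a non-edge means
that none are: only red edges hide mixed adjacency. Red edges between the parts `Tⱼ, T_ℓ` of
a decomposition only join vertices outside `Dⱼ ∪ D_ℓ`, whose bags miss `S`. So the covered
edges between `β(Tⱼ)` and `β(T_ℓ)` are counted bag pair by bag pair over the black edges `uw`,
and the covered pairs of `β(u) × β(w)` are all pairs except those of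
`(β(u) \ S) × (β(w) \ S)`. -/

namespace Finset

variable {β γ : Type*} [DecidableEq β] [DecidableEq γ]

theorem biUnion_product_biUnion {ι κ : Type*} (s : Finset ι) (t : Finset κ)
    (f : ι → Finset β) (g : κ → Finset γ) :
    s.biUnion f ×ˢ t.biUnion g = (s ×ˢ t).biUnion fun q => f q.1 ×ˢ g q.2 := by
  ext ⟨a, b⟩
  simp only [mem_product, mem_biUnion, Prod.exists]
  constructor
  · rintro ⟨⟨x, hx, ha⟩, y, hy, hb⟩
    exact ⟨x, y, ⟨hx, hy⟩, ha, hb⟩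
  · rintro ⟨x, y, ⟨hx, hy⟩, ha, hb⟩
    exact ⟨⟨x, hx, ha⟩, y, hy, hb⟩

theorem card_filter_product_mem_or_mem (A B S : Finset β) :
    #((A ×ˢ B).filter fun p => p.1 ∈ S ∨ p.2 ∈ S) =
      #(S ∩ A) * #B + #(S ∩ B) * #A - #(S ∩ A) * #(S ∩ B) := by
  have hmiss : (A ×ˢ B).filter (fun p => ¬(p.1 ∈ S ∨ p.2 ∈ S)) = (A \ S) ×ˢ (B \ S) := by
    ext p
    simp only [mem_filter, mem_product, mem_sdiff, not_or]
    tauto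
  have hsplit :=
    card_filter_add_card_filter_not (s := A ×ˢ B) (p := fun p => p.1 ∈ S ∨ p.2 ∈ S)
  rw [hmiss, card_product, card_product] at hsplit
  have hA := card_inter_add_card_sdiff A S
  have hB := card_inter_add_card_sdiff B S
  rw [inter_comm] at hA hB
  set c := #((A ×ˢ B).filter fun p => p.1 ∈ S ∨ p.2 ∈ S)
  have : #(S ∩ A) * #B + #(S ∩ B) * #A = c + #(S ∩ A) * #(S ∩ B) := by
    rw [← hA, ← hB] at hsplit ⊢
    nlinarith
  omega

theorem card_filter_product_and_mem_or_mem_eq_zero (p : β × β → Prop) [DecidablePred p]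
    {A B S : Finset β} (hA : Disjoint S A) (hB : Disjoint S B) :
    #((A ×ˢ B).filter fun q => p q ∧ (q.1 ∈ S ∨ q.2 ∈ S)) = 0 := by
  refine card_eq_zero.2 (filter_eq_empty_iff.2 fun q hq hcov => ?_)
  rw [mem_product] at hq
  rcases hcov.2 with h | h
  exacts [disjoint_left.1 hA h hq.1, disjoint_left.1 hB h hq.2]

end Finset

open Finset

theorem Contracts.mem_sdiff_of_mem {G G' : Trigraph α} {u v w x : α}
    (h : Contracts G G' u v w) (hx : x ∈ G'.verts) (hxw : x ≠ w) : x ∈ G.verts \ {u, v} := by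
  rw [h.2.2.2.2.1] at hx
  exact (mem_insert.1 hx).resolve_left hxw

namespace ContractionSeq

variable (C : ContractionSeq α n)

theorem bag_succ {j : ℕ} (hj : 1 ≤ j) (x : α) :
    C.bag (j + 1) x =
      if x = C.cw (j + 1) then C.bag j (C.cu (j + 1)) ∪ C.bag j (C.cv (j + 1))
      else C.bag j x := by
  obtain ⟨j, rfl⟩ : ∃ m, j = m + 1 := ⟨j - 1, by omega⟩
  rfl

structure BagsCoherent (j : ℕ) (x y : α) : Prop where
  disjoint : Disjoint (C.bag j x) (C.bag j y)
  black : (C.seq j).black x y → ∀ a ∈ C.bag j x, ∀ b ∈ C.bag j y, (C.seq 1).black a b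
  not_black : ¬(C.seq j).black x y → ¬(C.seq j).red x y →
    ∀ a ∈ C.bag j x, ∀ b ∈ C.bag j y, ¬(C.seq 1).black a b

variable {C}

theorem BagsCoherent.symm {j : ℕ} {x y : α} (h : C.BagsCoherent j x y) :
    C.BagsCoherent j y x where
  disjoint := h.disjoint.symm
  black hxy a ha b hb :=
    (C.seq 1).black_symm _ _ (h.black ((C.seq j).black_symm _ _ hxy) b hb a ha)
  not_black hb hr a ha b hb' hab :=
    h.not_black (fun h' => hb ((C.seq j).black_symm _ _ h'))
      (fun h' => hr ((C.seq j).red_symm _ _ h')) b hb' a ha ((C.seq 1).black_symm _ _ hab)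

theorem bagsCoherent_one {x y : α} (hxy : x ≠ y) : C.BagsCoherent 1 x y where
  disjoint := by simpa [bag] using hxy
  black h a ha b hb := by
    simp only [bag, mem_singleton] at ha hb
    exact ha ▸ hb ▸ h
  not_black h _ a ha b hb := by
    simp only [bag, mem_singleton] at ha hb
    exact ha ▸ hb ▸ h

theorem bagsCoherent_succ_new {j : ℕ} (hj : 1 ≤ j)
    (hstep : Contracts (C.seq j) (C.seq (j + 1)) (C.cu (j + 1)) (C.cv (j + 1)) (C.cw (j + 1)))
    {y : α} (hy : y ∈ (C.seq j).verts \ {C.cu (j + 1), C.cv (j + 1)})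
    (hu : C.BagsCoherent j (C.cu (j + 1)) y) (hv : C.BagsCoherent j (C.cv (j + 1)) y) :
    C.BagsCoherent (j + 1) (C.cw (j + 1)) y := by
  obtain ⟨-, -, -, hw, -, hblack, hred, -⟩ := hstep
  have hyw : y ≠ C.cw (j + 1) := fun h => hw (h ▸ (mem_sdiff.1 hy).1)
  have hbw := C.bag_succ hj (C.cw (j + 1))
  rw [if_pos rfl] at hbw
  have hby := C.bag_succ hj y
  rw [if_neg hyw] at hby
  refine ⟨?_, fun hwy => ?_, fun hnb hnr => ?_⟩ <;> rw [hbw, hby]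
  · exact disjoint_union_left.2 ⟨hu.disjoint, hv.disjoint⟩
  all_goals intro a ha b hb
  · rw [hblack y hy] at hwy
    rcases mem_union.1 ha with ha | ha
    exacts [hu.black hwy.1 a ha b hb, hv.black hwy.2 a ha b hb]
  · rw [hblack y hy] at hnb
    rw [hred y hy, not_and, not_or, not_or, not_or] at hnr
    obtain ⟨hbu, hru, hbv, hrv⟩ := hnr hnb
    rcases mem_union.1 ha with ha | ha
    exacts [hu.not_black hbu hru a ha b hb, hv.not_black hbv hrv a ha b hb]

theorem bagsCoherent_succ_old {j : ℕ} (hj : 1 ≤ j)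
    (hstep : Contracts (C.seq j) (C.seq (j + 1)) (C.cu (j + 1)) (C.cv (j + 1)) (C.cw (j + 1)))
    {x y : α} (hx : x ∈ (C.seq j).verts \ {C.cu (j + 1), C.cv (j + 1)})
    (hy : y ∈ (C.seq j).verts \ {C.cu (j + 1), C.cv (j + 1)})
    (hxy : C.BagsCoherent j x y) : C.BagsCoherent (j + 1) x y := by
  obtain ⟨-, -, -, hw, -, -, -, hold⟩ := hstep
  have hxw : x ≠ C.cw (j + 1) := fun h => hw (h ▸ (mem_sdiff.1 hx).1)
  have hyw : y ≠ C.cw (j + 1) := fun h => hw (h ▸ (mem_sdiff.1 hy).1)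
  obtain ⟨hblack, hred⟩ := hold x hx y hy
  have hbx := C.bag_succ hj x
  rw [if_neg hxw] at hbx
  have hby := C.bag_succ hj y
  rw [if_neg hyw] at hby
  refine ⟨?_, fun h => ?_, fun hb hr => ?_⟩ <;> rw [hbx, hby]
  exacts [hxy.disjoint, hxy.black (hblack.1 h), hxy.not_black (mt hblack.2 hb) (mt hred.2 hr)]

theorem bagsCoherent {j : ℕ} (hj : 1 ≤ j) (hjn : j ≤ n) {x y : α}
    (hx : x ∈ (C.seq j).verts) (hy : y ∈ (C.seq j).verts) (hxy : x ≠ y) :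
    C.BagsCoherent j x y := by
  induction j, hj using Nat.le_induction generalizing x y with
  | base => exact bagsCoherent_one hxy
  | succ j hj ih =>
    have hstep := C.step (j + 1) (by omega) hjn
    rw [Nat.add_sub_cancel] at hstep
    have hjn' : j ≤ n := by omega
    have hnew : ∀ z ∈ (C.seq (j + 1)).verts, z ≠ C.cw (j + 1) →
        C.BagsCoherent (j + 1) (C.cw (j + 1)) z := fun z hz hzw => by
      have hz := hstep.mem_sdiff_of_mem hz hzw
      have hzu : z ≠ C.cu (j + 1) := fun h => (mem_sdiff.1 hz).2 (by simp [h])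
      have hzv : z ≠ C.cv (j + 1) := fun h => (mem_sdiff.1 hz).2 (by simp [h])
      exact bagsCoherent_succ_new hj hstep hz (ih hjn' hstep.1 (mem_sdiff.1 hz).1 hzu.symm)
        (ih hjn' hstep.2.1 (mem_sdiff.1 hz).1 hzv.symm)
    by_cases hxw : x = C.cw (j + 1)
    · exact hxw ▸ hnew y hy (hxw ▸ hxy).symm
    by_cases hyw : y = C.cw (j + 1)
    · exact (hyw ▸ hnew x hx (hyw ▸ hxy)).symm
    have hx := hstep.mem_sdiff_of_mem hx hxw
    have hy := hstep.mem_sdiff_of_mem hy hyw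
    exact bagsCoherent_succ_old hj hstep hx hy (ih hjn' (mem_sdiff.1 hx).1 (mem_sdiff.1 hy).1 hxy)

theorem card_filter_bags_product {j : ℕ} (hj : 1 ≤ j) (hjn : j ≤ n) {T T' : Finset α}
    (hT : T ⊆ (C.seq j).verts) (hT' : T' ⊆ (C.seq j).verts) (p : α × α → Prop)
    [DecidablePred p] :
    #((C.bags j T ×ˢ C.bags j T').filter p) =
      ∑ q ∈ T ×ˢ T', #((C.bag j q.1 ×ˢ C.bag j q.2).filter p) := by
  rw [bags, bags, biUnion_product_biUnion, filter_biUnion, card_biUnion]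
  intro q hq q' hq' hne
  rw [coe_product, Set.mem_prod] at hq hq'
  refine disjoint_filter_filter (disjoint_product.2 ?_)
  by_cases h1 : q.1 = q'.1
  · exact .inr (C.bagsCoherent hj hjn (hT' hq.2) (hT' hq'.2)
      fun h2 => hne (Prod.ext h1 h2)).disjoint
  · exact .inl (C.bagsCoherent hj hjn (hT hq.1) (hT hq'.1) h1).disjoint

theorem card_covered_of_black {j : ℕ} (hj : 1 ≤ j) (hjn : j ≤ n) {u w : α}
    (hu : u ∈ (C.seq j).verts) (hw : w ∈ (C.seq j).verts) (huw : (C.seq j).black u w)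
    (S : Finset α) :
    #((C.bag j u ×ˢ C.bag j w).filter
        fun p => (C.seq 1).black p.1 p.2 ∧ (p.1 ∈ S ∨ p.2 ∈ S)) =
      #(S ∩ C.bag j u) * #(C.bag j w) + #(S ∩ C.bag j w) * #(C.bag j u)
        - #(S ∩ C.bag j u) * #(S ∩ C.bag j w) := by
  have hne : u ≠ w := fun h => (C.seq j).black_irrefl u (h ▸ huw)
  have hall := (C.bagsCoherent hj hjn hu hw hne).black huw
  rw [← card_filter_product_mem_or_mem]
  congr 1
  refine filter_congr fun p hp => ?_
  rw [mem_product] at hp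
  exact and_iff_right (hall _ hp.1 _ hp.2)

theorem card_covered_of_not_adj {j : ℕ} (hj : 1 ≤ j) (hjn : j ≤ n) {u w : α}
    (hu : u ∈ (C.seq j).verts) (hw : w ∈ (C.seq j).verts) (hne : u ≠ w)
    (hb : ¬(C.seq j).black u w) (hr : ¬(C.seq j).red u w) (S : Finset α) :
    #((C.bag j u ×ˢ C.bag j w).filter
        fun p => (C.seq 1).black p.1 p.2 ∧ (p.1 ∈ S ∨ p.2 ∈ S)) = 0 := by
  refine card_eq_zero.2 (filter_eq_empty_iff.2 fun p hp hcov => ?_)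
  rw [mem_product] at hp
  exact (C.bagsCoherent hj hjn hu hw hne).not_black hb hr _ hp.1 _ hp.2 hcov.1

end ContractionSeq

theorem IsFDecomp.eq_zero_of_red {C : ContractionSeq α n} {k d i m : ℕ} {T D M : Finset α}
    {f' : α → ℕ} {Tj Dj Mj : Fin m → Finset α} {fj : Fin m → α → ℕ}
    (hdec : IsFDecomp C k d i T D M f' m Tj Dj Mj fj) {j ℓ : Fin m} (hjl : j ≠ ℓ) {u w : α}
    (hu : u ∈ Tj j) (hw : w ∈ Tj ℓ) (hred : (C.seq (i - 1)).red u w) : fj j u = 0 := by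
  obtain ⟨hext, -, -, -, -, -, -, -, -, hnored⟩ := hdec
  obtain ⟨-, -, -, -, -, -, hDj⟩ := hext j
  by_contra h
  have hD : u ∈ Dj j := hDj ▸ mem_filter.2 ⟨hu, h⟩
  exact hnored ℓ j hjl.symm w hw u hD ((C.seq (i - 1)).red_symm _ _ hred)

theorem cross_cover_count_general {α : Type} [DecidableEq α] {n : ℕ}
    (C : ContractionSeq α n) (d k : ℕ)
    (i : ℕ) (h2 : 2 ≤ i) (hin : i ≤ n)
    (T D : Finset α)
    (f' : α → ℕ)
    (m : ℕ) (Tj Dj : Fin m → Finset α) (fj : Fin m → α → ℕ)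
    (hdec : IsFDecomp C k d i T D ∅ f' m Tj Dj (fun _ => ∅) fj)
    (S : Finset α)
    (hSf' : ∀ u ∈ newT C i T, (S ∩ C.bag (i - 1) u).card = f' u) :
    ∀ j ℓ, j ≠ ℓ →
      ((C.bags (i - 1) (Tj j) ×ˢ C.bags (i - 1) (Tj ℓ)).filter
          (fun p => (C.seq 1).black p.1 p.2 ∧ (p.1 ∈ S ∨ p.2 ∈ S))).card =
      ∑ p ∈ (Tj j ×ˢ Tj ℓ).filter (fun p => (C.seq (i - 1)).black p.1 p.2),
        (fj j p.1 * (C.bag (i - 1) p.2).card + fj ℓ p.2 * (C.bag (i - 1) p.1).card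
          - fj j p.1 * fj ℓ p.2) := by
  intro j ℓ hjl
  have hi : 1 ≤ i - 1 := by omega
  have hin' : i - 1 ≤ n := by omega
  have hzero_of_red : ∀ {u w}, u ∈ Tj j → w ∈ Tj ℓ → (C.seq (i - 1)).red u w →
      fj j u = 0 ∧ fj ℓ w = 0 := fun hu hw h =>
    ⟨hdec.eq_zero_of_red hjl hu hw h,
      hdec.eq_zero_of_red hjl.symm hw hu ((C.seq (i - 1)).red_symm _ _ h)⟩
  obtain ⟨hext, hfj, -, -, -, hdisj, hTun, -⟩ := hdec
  have hsub : ∀ j, Tj j ⊆ (C.seq (i - 1)).verts := fun j => (hext j).1.1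
  have hS : ∀ j, ∀ u ∈ Tj j, #(S ∩ C.bag (i - 1) u) = fj j u := fun j u hu => by
    rw [hfj j u hu, hSf' u (hTun ▸ mem_biUnion.2 ⟨j, mem_univ j, hu⟩)]
  rw [C.card_filter_bags_product hi hin' (hsub j) (hsub ℓ), sum_filter]
  refine sum_congr rfl fun p hp => ?_
  obtain ⟨hu, hw⟩ := mem_product.1 hp
  split_ifs with hblack
  · rw [C.card_covered_of_black hi hin' (hsub j hu) (hsub ℓ hw) hblack,
      hS j _ hu, hS ℓ _ hw]
  by_cases hred : (C.seq (i - 1)).red p.1 p.2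
  · obtain ⟨hu0, hw0⟩ := hzero_of_red hu hw hred
    refine card_filter_product_and_mem_or_mem_eq_zero _ ?_ ?_ <;>
      rw [disjoint_iff_inter_eq_empty, ← card_eq_zero]
    exacts [(hS j _ hu).trans hu0, (hS ℓ _ hw).trans hw0]
  · exact C.card_covered_of_not_adj hi hin' (hsub j hu) (hsub ℓ hw)
      ((hdisj j ℓ hjl).forall_ne_finset hu hw) hblack hred S

/-- (Cross-edge count for Partial Vertex Cover.) For distinct `j, ℓ`,
the number of covered edges between `β(Tⱼ)` and `β(T_ℓ)` equals the stated sum over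
black edges of `G_{i-1}` between `Tⱼ` and `T_ℓ`. -/
theorem cross_cover_count {α : Type} [DecidableEq α] {n : ℕ}
    (C : ContractionSeq α n) (d k : ℕ) (hW : C.HasWidth d)
    (i : ℕ) (h2 : 2 ≤ i) (hin : i ≤ n)
    (T D : Finset α) (f : α → ℕ) (hπ : IsExtProfile C k d i T D ∅ f)
    (hv : C.cw i ∈ T)
    (f' : α → ℕ) (hf' : FCompat C k i T f f')
    (m : ℕ) (Tj Dj : Fin m → Finset α) (fj : Fin m → α → ℕ)
    (hdec : IsFDecomp C k d i T D ∅ f' m Tj Dj (fun _ => ∅) fj)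
    (S : Finset α) (hS : IsSolution C i T f S)
    (hSf' : ∀ u ∈ newT C i T, (S ∩ C.bag (i - 1) u).card = f' u) :
    ∀ j ℓ, j ≠ ℓ →
      ((C.bags (i - 1) (Tj j) ×ˢ C.bags (i - 1) (Tj ℓ)).filter
          (fun p => (C.seq 1).black p.1 p.2 ∧ (p.1 ∈ S ∨ p.2 ∈ S))).card =
      ∑ p ∈ (Tj j ×ˢ Tj ℓ).filter (fun p => (C.seq (i - 1)).black p.1 p.2),
        (fj j p.1 * (C.bag (i - 1) p.2).card + fj ℓ p.2 * (C.bag (i - 1) p.1).card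
          - fj j p.1 * fj ℓ p.2) :=
  cross_cover_count_general C d k i h2 hin T D f' m Tj Dj fj hdec S hSf'
end
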